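/- arXiv:1610.02194 — 2 statements merged into one kernel-verified Lean document; each statement's English description precedes it below -/
import Mathlib

section
/- For any ordinal β that is additive principal (i.e., β = ω^γ for some γ), there exist unique ordinals β₁ ≤ β and β₂ < β such that β = φ β₁ β₂, where φ is the binary Veblen function. -/
open Ordinal

/-- `Ordinal.derivBFamily` as it stood in Mathlib (Dec 2024), since removed. -/
noncomputable def derivBFamily.{u, v} (o : Ordinal.{u})
    (f : ∀ b < o, Ordinal.{max u v} → Ordinal.{max u v}) :
    Ordinal.{max u v} → Ordinal.{max u v} :=
  derivFamily (familyOfBFamily o f)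

/-- The binary Veblen function: `veblen 0 β = ω ^ β`, and for `α > 0`,
`veblen α` enumerates the common fixed points of `veblen γ` for `γ < α`. -/
noncomputable def veblen : Ordinal → Ordinal → Ordinal :=
  WellFounded.fix Ordinal.lt_wf
    (fun α ih => if α = 0 then fun β => omega0 ^ β
      else derivBFamily.{0,0} α (fun ξ h => ih ξ h))

/-- The set of strongly critical ordinals. -/
def StronglyCritical (γ : Ordinal) : Prop := _root_.veblen γ 0 = γ

/-- `Gamma β` is the `β`-th strongly critical ordinal. -/
noncomputable def Gamma : Ordinal → Ordinal :=
  enumOrd {γ | StronglyCritical γ}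

/-- The least uncountable cardinal (as an ordinal) greater than `θ`. -/
noncomputable def OmegaB (θ : Ordinal) : Ordinal :=
  sInf {o | θ < o ∧ o.card.ord = o ∧ Cardinal.aleph0 < o.card}

/-- Closure of `{0, Ω} ∪ {Γ_β : β ≤ θ}` under `+`, `veblen` and the
given partial collapsing function `f` on arguments below `α`. -/
def closB (θ α : Ordinal) (f : ∀ ξ, ξ < α → Ordinal) : Set Ordinal :=
  ⋂₀ {S : Set Ordinal |
      0 ∈ S ∧ OmegaB θ ∈ S ∧ (∀ β ≤ θ, Gamma β ∈ S) ∧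
      (∀ x ∈ S, ∀ y ∈ S, x + y ∈ S) ∧
      (∀ x ∈ S, ∀ y ∈ S, _root_.veblen x y ∈ S) ∧
      (∀ ξ (h : ξ < α), ξ ∈ S → f ξ h ∈ S)}

/-- The relativised collapsing function `ψ_θ`. -/
noncomputable def psiB (θ : Ordinal) : Ordinal → Ordinal :=
  WellFounded.fix Ordinal.lt_wf
    (fun α ih => sInf {β | β ∉ closB θ α (fun ξ h => ih ξ h)})

/-- The relativised collapsing hierarchy `B_θ(α)`. -/
def BB (θ α : Ordinal) : Set Ordinal :=
  closB θ α (fun ξ _ => psiB θ ξ)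

/-- The least strongly critical ordinal strictly above `δ`. -/
noncomputable def gammaSucc (δ : Ordinal) : Ordinal :=
  sInf {γ | δ < γ ∧ StronglyCritical γ}

/-!
Both `veblen α` and Mathlib's `Ordinal.veblen α` are normal functions, and for `α ≠ 0` each has as
range the common fixed points of the lower levels; by induction on `α` they have the same range, so
they coincide. Mathlib's inverse Veblen functions `invVeblen₁`, `invVeblen₂` then produce the pair
for `ω ^ x`, and `veblen_eq_opow_iff` shows that it is the only one with `β₂ < φ β₁ β₂`.
-/

open Set

theorem isNormal_derivBFamily.{u, v} {o : Ordinal.{u}}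
    (f : ∀ b < o, Ordinal.{max u v} → Ordinal.{max u v}) :
    Order.IsNormal (derivBFamily.{u, v} o f) :=
  isNormal_derivFamily _

set_option linter.deprecated false in
theorem mem_range_derivBFamily.{u, v} {o : Ordinal.{u}}
    {f : ∀ b < o, Ordinal.{max u v} → Ordinal.{max u v}}
    (H : ∀ i hi, Order.IsNormal (f i hi)) {a : Ordinal.{max u v}} :
    a ∈ range (derivBFamily.{u, v} o f) ↔ ∀ i hi, f i hi a = a := by
  rw [derivBFamily, mem_range_derivFamily (f := familyOfBFamily o f) fun _ => H _ _]
  refine ⟨fun h i hi => ?_, fun h j => h _ _⟩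
  rw [← familyOfBFamily_enum o f i hi]
  exact h _

theorem veblen_eq_ite (α : Ordinal) : _root_.veblen α =
    if α = 0 then (ω ^ ·) else derivBFamily.{0, 0} α fun ξ _ => _root_.veblen ξ := by
  rw [_root_.veblen, WellFounded.fix_eq]

theorem veblen_eq_ordinalVeblen : _root_.veblen = Ordinal.veblen := by
  funext α
  induction α using WellFoundedLT.induction with
  | _ α ih =>
    rcases eq_or_ne α 0 with rfl | hα
    · simp [veblen_eq_ite]
    · rw [veblen_eq_ite, if_neg hα]
      refine ((isNormal_derivBFamily _).strictMono.range_inj (isNormal_veblen α).strictMono).mp ?_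
      ext a
      rw [mem_range_derivBFamily fun γ hγ => ih γ hγ ▸ isNormal_veblen γ, mem_range_veblen hα]
      exact forall₂_congr fun γ hγ => by rw [ih γ hγ]

theorem existsUnique_veblen_eq_opow (x : Ordinal) :
    ∃! p : Ordinal × Ordinal, p.1 ≤ ω ^ x ∧ p.2 < ω ^ x ∧ ω ^ x = Ordinal.veblen p.1 p.2 := by
  refine ⟨(invVeblen₁ x, invVeblen₂ x),
    ⟨?_, invVeblen₂_lt x, (veblen_invVeblen₁_invVeblen₂ x).symm⟩, ?_⟩
  · exact (invVeblen₁_le x).trans (right_le_opow x one_lt_omega0)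
  · rintro ⟨a, b⟩ ⟨-, hb, h⟩
    obtain ⟨rfl, rfl⟩ := (veblen_eq_opow_iff (h ▸ hb)).mp h.symm
    rfl

theorem stmt0 (β : Ordinal) (hβ : ∃ γ, β = Ordinal.omega0 ^ γ) :
    ∃! p : Ordinal × Ordinal, p.1 ≤ β ∧ p.2 < β ∧ β = _root_.veblen p.1 p.2 := by
  -- the exponent in `hβ` elaborates as a natural number (a monoid power)
  obtain ⟨n, rfl⟩ := hβ
  rw [veblen_eq_ordinalVeblen, ← opow_natCast]
  exact existsUnique_veblen_eq_opow n
end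

section
/- With B and ψ the relativised collapsing hierarchy: if γ ∈ B(δ) and γ < δ, then ψ(γ) < ψ(δ). -/
open Ordinal

/-! Since `ψ(δ)` is the least ordinal outside `B(δ)`, it suffices that `B(δ)` is a proper
subclass of the ordinals (it is small, being the image of a type of terms), that `B` is monotone
(so `ψ` is), and that `ψ(γ) ∈ B(δ)` while `ψ(δ) ∉ B(δ)`. -/

/-- Terms generating `closB θ α f`; the `Shrink`s keep the type in `Type`, so that its image
is a small set of ordinals. -/
inductive ClosBTerm (θ α : Ordinal) : Type where
  | zero : ClosBTerm θ α
  | omega : ClosBTerm θ α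
  | gamma (β : Shrink (Set.Iic θ)) : ClosBTerm θ α
  | add (x y : ClosBTerm θ α) : ClosBTerm θ α
  | veblen (x y : ClosBTerm θ α) : ClosBTerm θ α
  | collapse (ξ : Shrink (Set.Iio α)) : ClosBTerm θ α

namespace ClosBTerm

variable {θ α : Ordinal}

noncomputable def eval (f : ∀ ξ, ξ < α → Ordinal) : ClosBTerm θ α → Ordinal
  | zero => 0
  | omega => OmegaB θ
  | gamma β => Gamma ((equivShrink (Set.Iic θ)).symm β : Set.Iic θ)
  | add x y => eval f x + eval f y
  | veblen x y => _root_.veblen (eval f x) (eval f y)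
  | collapse ξ => f ((equivShrink (Set.Iio α)).symm ξ) ((equivShrink (Set.Iio α)).symm ξ).2

end ClosBTerm

section closB

variable {θ α : Ordinal} {f : ∀ ξ, ξ < α → Ordinal}

theorem closB_subset_range_eval : closB θ α f ⊆ Set.range (ClosBTerm.eval (θ := θ) f) := by
  intro x hx
  refine hx _ ⟨⟨.zero, rfl⟩, ⟨.omega, rfl⟩, fun β hβ => ?_, ?_, ?_, fun ξ hξ _ => ?_⟩
  · exact ⟨.gamma (equivShrink (Set.Iic θ) ⟨β, hβ⟩), by simp [ClosBTerm.eval]⟩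
  · rintro _ ⟨a, rfl⟩ _ ⟨b, rfl⟩
    exact ⟨.add a b, rfl⟩
  · rintro _ ⟨a, rfl⟩ _ ⟨b, rfl⟩
    exact ⟨.veblen a b, rfl⟩
  · exact ⟨.collapse (equivShrink (Set.Iio α) ⟨ξ, hξ⟩), by simp [ClosBTerm.eval]⟩

instance small_closB : Small.{0} (closB θ α f) :=
  small_subset closB_subset_range_eval

theorem compl_closB_nonempty : (closB θ α f)ᶜ.Nonempty :=
  nonempty_of_not_bddAbove (not_bddAbove_compl_of_small _)

theorem apply_mem_closB {ξ : Ordinal} (hξ : ξ < α) (hmem : ξ ∈ closB θ α f) :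
    f ξ hξ ∈ closB θ α f :=
  fun _ hS => hS.2.2.2.2.2 ξ hξ (hmem _ hS)

theorem closB_mono {α' : Ordinal} {g : ∀ ξ, ξ < α' → Ordinal} (hα : α ≤ α')
    (hfg : ∀ ξ (hξ : ξ < α), g ξ (hξ.trans_le hα) = f ξ hξ) :
    closB θ α f ⊆ closB θ α' g := by
  intro x hx S ⟨h0, hΩ, hΓ, hadd, hveb, hg⟩
  exact hx S ⟨h0, hΩ, hΓ, hadd, hveb, fun ξ hξ hmem => hfg ξ hξ ▸ hg ξ _ hmem⟩

end closB

section psiB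

variable {θ γ δ : Ordinal}

theorem psiB_eq_sInf_compl_BB : psiB θ δ = sInf (BB θ δ)ᶜ := by
  rw [psiB, WellFounded.fix_eq]
  rfl

theorem psiB_notMem_BB : psiB θ δ ∉ BB θ δ := by
  rw [psiB_eq_sInf_compl_BB]
  exact csInf_mem compl_closB_nonempty

theorem psiB_mem_BB_of_lt (hmem : γ ∈ BB θ δ) (hlt : γ < δ) : psiB θ γ ∈ BB θ δ :=
  apply_mem_closB (f := fun ξ _ => psiB θ ξ) hlt hmem

theorem BB_mono (h : γ ≤ δ) : BB θ γ ⊆ BB θ δ :=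
  closB_mono h fun _ _ => rfl

theorem psiB_mono (h : γ ≤ δ) : psiB θ γ ≤ psiB θ δ := by
  rw [psiB_eq_sInf_compl_BB, psiB_eq_sInf_compl_BB]
  exact csInf_le_csInf (OrderBot.bddBelow _) compl_closB_nonempty
    (Set.compl_subset_compl.2 (BB_mono h))

end psiB

theorem stmt7 (θ γ δ : Ordinal) (h1 : γ ∈ BB θ δ) (h2 : γ < δ) :
    psiB θ γ < psiB θ δ :=
  (psiB_mono h2.le).lt_of_ne fun h => psiB_notMem_BB (h ▸ psiB_mem_BB_of_lt h1 h2)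
end
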